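/- arXiv:1505.03638 — 3 statements merged into one kernel-verified Lean document; each statement's English description precedes it below -/
import Mathlib

section
/- Let μ, ρ, ν be premetrics on S such that for all s, t, u ∈ S, μ(s,t) ≤ ρ(s,u) + ν(u,t). Then for any finite subdistributions D, E, F on S, the Kantorovich lifting satisfies μ̂(D,F) ≤ ρ̂(D,E) + ν̂(E,F). -/
noncomputable section
open Classical

/-- A premetric on `S`: a `[0,1]`-valued function vanishing on the diagonal. -/
def IsPremetric {S : Type*} (μ : S → S → ℝ) : Prop :=
  (∀ s t, 0 ≤ μ s t) ∧ (∀ s t, μ s t ≤ 1) ∧ ∀ s, μ s s = 0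

/-- A finite subdistribution on `S`: nonnegative, finitely supported, total mass ≤ 1. -/
def IsSubdist {S : Type*} (D : S →₀ ℝ) : Prop :=
  (∀ s, 0 ≤ D s) ∧ D.sum (fun _ p => p) ≤ 1

/-- The dual (LP) formulation of the Kantorovich lifting of `μ` to finite
subdistributions: the maximum of `Σ_s a_s D(s) + b_s E(s)` subject to
`a_s ≤ 1`, `b_s ≤ 1`, and `a_s + b_t ≤ μ(s,t)`. -/
def dualLift {S : Type*} (μ : S → S → ℝ) (D E : S →₀ ℝ) : ℝ :=
  sSup {r | ∃ a b : S → ℝ,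
    (∀ s, a s ≤ 1) ∧ (∀ s, b s ≤ 1) ∧ (∀ s t, a s + b t ≤ μ s t) ∧
    r = D.sum (fun s p => a s * p) + E.sum (fun s p => b s * p)}

/-- The primal (LP) formulation of the Kantorovich lifting of `μ`: the minimum
of `Σ h_{s,t} μ(s,t) + Σ w_s + Σ z_t` subject to the marginal constraints. -/
def primLift {S : Type*} (μ : S → S → ℝ) (D E : S →₀ ℝ) : ℝ :=
  sInf {r | ∃ (h : S → S → ℝ) (w z : S → ℝ),
    (∀ s t, 0 ≤ h s t) ∧ (∀ s, 0 ≤ w s) ∧ (∀ s, 0 ≤ z s) ∧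
    (∀ t ∈ E.support, (∑ s ∈ D.support, h s t) + z t = E t) ∧
    (∀ s ∈ D.support, (∑ t ∈ E.support, h s t) + w s = D s) ∧
    r = (∑ s ∈ D.support, ∑ t ∈ E.support, h s t * μ s t) +
        (∑ s ∈ D.support, w s) + (∑ t ∈ E.support, z t)}

/-- The feasible-value set of the primal LP. -/
def primSet {S : Type*} (μ : S → S → ℝ) (D E : S →₀ ℝ) : Set ℝ :=
  {r | ∃ (h : S → S → ℝ) (w z : S → ℝ),
    (∀ s t, 0 ≤ h s t) ∧ (∀ s, 0 ≤ w s) ∧ (∀ s, 0 ≤ z s) ∧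
    (∀ t ∈ E.support, (∑ s ∈ D.support, h s t) + z t = E t) ∧
    (∀ s ∈ D.support, (∑ t ∈ E.support, h s t) + w s = D s) ∧
    r = (∑ s ∈ D.support, ∑ t ∈ E.support, h s t * μ s t) +
        (∑ s ∈ D.support, w s) + (∑ t ∈ E.support, z t)}

lemma primLift_eq {S : Type*} (μ : S → S → ℝ) (D E : S →₀ ℝ) :
    primLift μ D E = sInf (primSet μ D E) := rfl

lemma primSet_nonempty {S : Type*} (μ : S → S → ℝ) (D E : S →₀ ℝ)
    (hD : ∀ s, 0 ≤ D s) (hE : ∀ s, 0 ≤ E s) : (primSet μ D E).Nonempty := by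
  refine ⟨_, fun _ _ => 0, fun s => D s, fun t => E t, fun _ _ => le_rfl, hD, hE,
    ?_, ?_, rfl⟩ <;> intro t _ <;> simp

lemma primSet_bddBelow {S : Type*} (μ : S → S → ℝ) (D E : S →₀ ℝ)
    (hμ : ∀ s t, 0 ≤ μ s t) : BddBelow (primSet μ D E) := by
  refine ⟨0, fun r hr => ?_⟩
  obtain ⟨h, w, z, hn, wn, zn, _, _, hr⟩ := hr
  subst hr
  have t1 : 0 ≤ ∑ s ∈ D.support, ∑ t ∈ E.support, h s t * μ s t :=
    Finset.sum_nonneg fun s _ => Finset.sum_nonneg fun t _ =>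
      mul_nonneg (hn s t) (hμ s t)
  have t2 : 0 ≤ ∑ s ∈ D.support, w s := Finset.sum_nonneg fun s _ => wn s
  have t3 : 0 ≤ ∑ t ∈ E.support, z t := Finset.sum_nonneg fun t _ => zn t
  linarith

lemma inner_bound {κ : Type*} (B : Finset κ) (c e : ℝ) (g : κ → ℝ)
    (hc : 0 ≤ c) (he : 0 < e) (hg : (∑ u ∈ B, g u) ≤ e) :
    ∑ u ∈ B, c * g u / e ≤ c := by
  have h1 : ∑ u ∈ B, c * g u / e = c / e * ∑ u ∈ B, g u := by
    rw [Finset.mul_sum]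
    exact Finset.sum_congr rfl fun u _ => by ring
  rw [h1]
  calc c / e * ∑ u ∈ B, g u ≤ c / e * e :=
        mul_le_mul_of_nonneg_left hg (div_nonneg hc he.le)
    _ = c := div_mul_cancel₀ c he.ne'

lemma le_sInf_add_sInf {x : ℝ} {B C : Set ℝ} (hB : B.Nonempty) (hC : C.Nonempty)
    (h : ∀ b ∈ B, ∀ c ∈ C, x ≤ b + c) : x ≤ sInf B + sInf C := by
  have h1 : ∀ b ∈ B, x - b ≤ sInf C := fun b hb =>
    le_csInf hC fun c hc => by linarith [h b hb c hc]
  have h2 : x - sInf C ≤ sInf B := le_csInf hB fun b hb => by linarith [h1 b hb]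
  linarith

/-- triangle-like inequality for the Kantorovich lifting. -/
theorem lift_triangle {S : Type*} (μ ρ ν : S → S → ℝ)
    (hμ : IsPremetric μ) (hρ : IsPremetric ρ) (hν : IsPremetric ν)
    (htri : ∀ s t u : S, μ s t ≤ ρ s u + ν u t)
    (D E F : S →₀ ℝ) (hD : IsSubdist D) (hE : IsSubdist E) (hF : IsSubdist F) :
    primLift μ D F ≤ primLift ρ D E + primLift ν E F := by
  obtain ⟨hμ0, -, -⟩ := hμ
  obtain ⟨hρ0, -, -⟩ := hρ
  obtain ⟨hν0, -, -⟩ := hν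
  have hD0 := hD.1
  have hE0 := hE.1
  have hF0 := hF.1
  have hEpos : ∀ t ∈ E.support, 0 < E t := fun t ht =>
    lt_of_le_of_ne (hE0 t) (Ne.symm (Finsupp.mem_support_iff.mp ht))
  have hAbdd : BddBelow (primSet μ D F) := primSet_bddBelow μ D F hμ0
  have hBne : (primSet ρ D E).Nonempty := primSet_nonempty ρ D E hD0 hE0
  have hCne : (primSet ν E F).Nonempty := primSet_nonempty ν E F hE0 hF0
  rw [primLift_eq ρ D E, primLift_eq ν E F]
  refine le_sInf_add_sInf hBne hCne ?_
  rintro r1 ⟨h1, w1, z1, h1n, w1n, z1n, c1E, c1D, hr1⟩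
  rintro r2 ⟨h2, w2, z2, h2n, w2n, z2n, c2F, c2E, hr2⟩
  have hsum1 : ∀ t ∈ E.support, (∑ s ∈ D.support, h1 s t) ≤ E t := fun t ht => by
    have := c1E t ht; linarith [z1n t]
  have hsum2 : ∀ t ∈ E.support, (∑ u ∈ F.support, h2 t u) ≤ E t := fun t ht => by
    have := c2E t ht; linarith [w2n t]
  -- the glued coupling
  set h : S → S → ℝ := fun s u => ∑ t ∈ E.support, h1 s t * h2 t u / E t with hh
  set w : S → ℝ := fun s => w1 s + ∑ t ∈ E.support, h1 s t * w2 t / E t with hw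
  set z : S → ℝ := fun u => z2 u + ∑ t ∈ E.support, z1 t * h2 t u / E t with hz
  have hn : ∀ s u, 0 ≤ h s u := fun s u => Finset.sum_nonneg fun t ht =>
    div_nonneg (mul_nonneg (h1n s t) (h2n t u)) (hEpos t ht).le
  have wn : ∀ s, 0 ≤ w s := fun s => add_nonneg (w1n s)
    (Finset.sum_nonneg fun t ht =>
      div_nonneg (mul_nonneg (h1n s t) (w2n t)) (hEpos t ht).le)
  have zn : ∀ u, 0 ≤ z u := fun u => add_nonneg (z2n u)
    (Finset.sum_nonneg fun t ht =>
      div_nonneg (mul_nonneg (z1n t) (h2n t u)) (hEpos t ht).le)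
  have cF : ∀ u ∈ F.support, (∑ s ∈ D.support, h s u) + z u = F u := by
    intro u hu
    have e2 := c2F u hu
    have swap : (∑ s ∈ D.support, h s u)
        = ∑ t ∈ E.support, (∑ s ∈ D.support, h1 s t) * h2 t u / E t := by
      simp only [hh]
      rw [Finset.sum_comm]
      exact Finset.sum_congr rfl fun t _ => by rw [Finset.sum_mul, Finset.sum_div]
    have perterm : ∀ t ∈ E.support,
        (∑ s ∈ D.support, h1 s t) * h2 t u / E t + z1 t * h2 t u / E t = h2 t u := by
      intro t ht
      have e1 := c1E t ht
      have hne := (hEpos t ht).ne'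
      have hs : (∑ s ∈ D.support, h1 s t) = E t - z1 t := by linarith
      rw [hs]
      field_simp
      ring
    have hsums : (∑ t ∈ E.support, (∑ s ∈ D.support, h1 s t) * h2 t u / E t)
        + (∑ t ∈ E.support, z1 t * h2 t u / E t) = ∑ t ∈ E.support, h2 t u := by
      rw [← Finset.sum_add_distrib]
      exact Finset.sum_congr rfl perterm
    simp only [hz]
    rw [swap]
    linarith
  have cD : ∀ s ∈ D.support, (∑ u ∈ F.support, h s u) + w s = D s := by
    intro s hs
    have e1 := c1D s hs
    have swap : (∑ u ∈ F.support, h s u)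
        = ∑ t ∈ E.support, h1 s t * (∑ u ∈ F.support, h2 t u) / E t := by
      simp only [hh]
      rw [Finset.sum_comm]
      exact Finset.sum_congr rfl fun t _ => by rw [Finset.mul_sum, Finset.sum_div]
    have perterm : ∀ t ∈ E.support,
        h1 s t * (∑ u ∈ F.support, h2 t u) / E t + h1 s t * w2 t / E t = h1 s t := by
      intro t ht
      have e2 := c2E t ht
      have hne := (hEpos t ht).ne'
      have hs2 : (∑ u ∈ F.support, h2 t u) = E t - w2 t := by linarith
      rw [hs2]
      field_simp
      ring
    have hsums : (∑ t ∈ E.support, h1 s t * (∑ u ∈ F.support, h2 t u) / E t)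
        + (∑ t ∈ E.support, h1 s t * w2 t / E t) = ∑ t ∈ E.support, h1 s t := by
      rw [← Finset.sum_add_distrib]
      exact Finset.sum_congr rfl perterm
    simp only [hw]
    rw [swap]
    linarith
  have hmem : ((∑ s ∈ D.support, ∑ u ∈ F.support, h s u * μ s u) +
      (∑ s ∈ D.support, w s) + (∑ u ∈ F.support, z u)) ∈ primSet μ D F :=
    ⟨h, w, z, hn, wn, zn, cF, cD, rfl⟩
  have step1 : primLift μ D F ≤ (∑ s ∈ D.support, ∑ u ∈ F.support, h s u * μ s u) +
      (∑ s ∈ D.support, w s) + (∑ u ∈ F.support, z u) := csInf_le hAbdd hmem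
  -- bound the transport cost
  have bμ : (∑ s ∈ D.support, ∑ u ∈ F.support, h s u * μ s u) ≤
      ∑ s ∈ D.support, ∑ u ∈ F.support, ∑ t ∈ E.support,
        h1 s t * h2 t u / E t * (ρ s t + ν t u) := by
    refine Finset.sum_le_sum fun s _ => Finset.sum_le_sum fun u _ => ?_
    simp only [hh]
    rw [Finset.sum_mul]
    refine Finset.sum_le_sum fun t ht => ?_
    exact mul_le_mul_of_nonneg_left (htri s u t)
      (div_nonneg (mul_nonneg (h1n s t) (h2n t u)) (hEpos t ht).le)
  have Tsplit : (∑ s ∈ D.support, ∑ u ∈ F.support, ∑ t ∈ E.support,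
        h1 s t * h2 t u / E t * (ρ s t + ν t u))
      = (∑ s ∈ D.support, ∑ u ∈ F.support, ∑ t ∈ E.support,
          h1 s t * h2 t u / E t * ρ s t)
      + (∑ s ∈ D.support, ∑ u ∈ F.support, ∑ t ∈ E.support,
          h1 s t * h2 t u / E t * ν t u) := by
    simp only [mul_add, Finset.sum_add_distrib]
  have bT1 : (∑ s ∈ D.support, ∑ u ∈ F.support, ∑ t ∈ E.support,
        h1 s t * h2 t u / E t * ρ s t)
      ≤ ∑ s ∈ D.support, ∑ t ∈ E.support, h1 s t * ρ s t := by
    refine Finset.sum_le_sum fun s _ => ?_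
    rw [Finset.sum_comm]
    refine Finset.sum_le_sum fun t ht => ?_
    calc ∑ u ∈ F.support, h1 s t * h2 t u / E t * ρ s t
        = ∑ u ∈ F.support, (h1 s t * ρ s t) * h2 t u / E t :=
          Finset.sum_congr rfl fun u _ => by ring
      _ ≤ h1 s t * ρ s t := inner_bound F.support _ (E t) (fun u => h2 t u)
          (mul_nonneg (h1n s t) (hρ0 s t)) (hEpos t ht) (hsum2 t ht)
  have bT2 : (∑ s ∈ D.support, ∑ u ∈ F.support, ∑ t ∈ E.support,
        h1 s t * h2 t u / E t * ν t u)
      ≤ ∑ t ∈ E.support, ∑ u ∈ F.support, h2 t u * ν t u := by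
    calc (∑ s ∈ D.support, ∑ u ∈ F.support, ∑ t ∈ E.support,
          h1 s t * h2 t u / E t * ν t u)
        = ∑ u ∈ F.support, ∑ t ∈ E.support, ∑ s ∈ D.support,
            (h2 t u * ν t u) * h1 s t / E t := by
          rw [Finset.sum_comm]
          refine Finset.sum_congr rfl fun u _ => ?_
          rw [Finset.sum_comm]
          exact Finset.sum_congr rfl fun t _ =>
            Finset.sum_congr rfl fun s _ => by ring
      _ ≤ ∑ u ∈ F.support, ∑ t ∈ E.support, h2 t u * ν t u :=
          Finset.sum_le_sum fun u _ => Finset.sum_le_sum fun t ht =>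
            inner_bound D.support _ (E t) (fun s => h1 s t)
              (mul_nonneg (h2n t u) (hν0 t u)) (hEpos t ht) (hsum1 t ht)
      _ = ∑ t ∈ E.support, ∑ u ∈ F.support, h2 t u * ν t u := Finset.sum_comm
  have bw : (∑ s ∈ D.support, w s) ≤
      (∑ s ∈ D.support, w1 s) + ∑ t ∈ E.support, w2 t := by
    simp only [hw]
    rw [Finset.sum_add_distrib]
    have : (∑ s ∈ D.support, ∑ t ∈ E.support, h1 s t * w2 t / E t)
        ≤ ∑ t ∈ E.support, w2 t := by
      rw [Finset.sum_comm]
      refine Finset.sum_le_sum fun t ht => ?_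
      calc ∑ s ∈ D.support, h1 s t * w2 t / E t
          = ∑ s ∈ D.support, w2 t * h1 s t / E t :=
            Finset.sum_congr rfl fun s _ => by ring
        _ ≤ w2 t := inner_bound D.support _ (E t) (fun s => h1 s t)
            (w2n t) (hEpos t ht) (hsum1 t ht)
    linarith
  have bz : (∑ u ∈ F.support, z u) ≤
      (∑ u ∈ F.support, z2 u) + ∑ t ∈ E.support, z1 t := by
    simp only [hz]
    rw [Finset.sum_add_distrib]
    have : (∑ u ∈ F.support, ∑ t ∈ E.support, z1 t * h2 t u / E t)
        ≤ ∑ t ∈ E.support, z1 t := by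
      rw [Finset.sum_comm]
      refine Finset.sum_le_sum fun t ht => ?_
      exact inner_bound F.support _ (E t) (fun u => h2 t u)
        (z1n t) (hEpos t ht) (hsum2 t ht)
    linarith
  rw [hr1, hr2]
  linarith
end
end

section
/- The primal LP defining the Kantorovich lifting and its dual have equal optimal values: for any premetric μ on S and finite subdistributions D, E, the minimum of Σ h_{i,j} μ(s_i,s_j) + Σ w_i + Σ z_j subject to the marginal constraints equals the maximum of Σ_s a_s D(s) + b_s E(s) subject to a_s ≤ 1, b_s ≤ 1, and a_s + b_t ≤ μ(s,t). -/
/-!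
After restricting to the supports, the primal is the linear program `min c ⬝ᵥ x` subject to
`A *ᵥ x = (D, E)`, `x ≥ 0`, whose columns are the plan entries `h s t` and the slacks `w s`,
`z t`; its dual constraints `y ᵥ* A ≤ c` are exactly `a s + b t ≤ μ s t`, `a s ≤ 1`, `b t ≤ 1`.
Weak duality is a direct computation. For strong duality, if `r` is below every primal value then
`A *ᵥ x = (D, E)`, `c ⬝ᵥ x + u = r` has no solution with `x, u ≥ 0`, and Farkas' lemma (hyperplane
separation from the cone `A *ᵥ ℝ≥0^ι`) yields a dual solution of value above `r`. That cone is
closed because `A` is entrywise nonnegative without zero columns, so a nonnegative `x` is bounded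
in terms of `A *ᵥ x`. Dual variables off the supports are set to `-1`, harmless since `μ ≥ 0`.
-/

noncomputable section
open Classical

open Matrix

namespace Matrix

variable {κ ι : Type*} [Fintype ι]

theorem mul_apply_le_mulVec_apply {A : Matrix κ ι ℝ} (hA : ∀ k i, 0 ≤ A k i) {x : ι → ℝ}
    (hx : 0 ≤ x) (k : κ) (i : ι) : A k i * x i ≤ (A *ᵥ x) k :=
  Finset.single_le_sum (f := fun j => A k j * x j) (fun j _ => mul_nonneg (hA k j) (hx j))
    (Finset.mem_univ i)

variable [Fintype κ]

theorem isClosed_image_mulVec_nonneg {A : Matrix κ ι ℝ} (hA : ∀ k i, 0 ≤ A k i)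
    (hcol : ∀ i, ∃ k, 0 < A k i) : IsClosed ((A *ᵥ ·) '' Set.Ici 0) := by
  choose r hr using hcol
  refine IsSeqClosed.isClosed fun {v b} hv hvb => ?_
  choose x hx₀ hxv using hv
  obtain ⟨c, hc⟩ := hvb.bddAbove_range
  have hbox : ∀ n, x n ∈ Set.univ.pi fun i => Set.Icc 0 (c (r i) / A (r i) i) := by
    intro n i _
    refine ⟨hx₀ n i, (le_div_iff₀' (hr i)).2 ?_⟩
    calc A (r i) i * x n i ≤ (A *ᵥ x n) (r i) := mul_apply_le_mulVec_apply hA (hx₀ n) _ _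
      _ = v n (r i) := congrFun (hxv n) _
      _ ≤ c (r i) := hc (Set.mem_range_self n) (r i)
  obtain ⟨x', hx', φ, hφ, hlim⟩ :=
    (isCompact_univ_pi fun i => isCompact_Icc).tendsto_subseq hbox
  refine ⟨x', fun i => (hx' i (Set.mem_univ i)).1,
    tendsto_nhds_unique ?_ (hvb.comp hφ.tendsto_atTop)⟩
  have hcont : Continuous (A *ᵥ ·) := continuous_const.matrix_mulVec continuous_id
  simpa [Function.comp_def, hxv] using (hcont.tendsto x').comp hlim

theorem exists_vecMul_nonneg_dotProduct_neg {A : Matrix κ ι ℝ} (hA : ∀ k i, 0 ≤ A k i)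
    (hcol : ∀ i, ∃ k, 0 < A k i) {b : κ → ℝ} (hb : ∀ x, 0 ≤ x → A *ᵥ x ≠ b) :
    ∃ y : κ → ℝ, 0 ≤ y ᵥ* A ∧ y ⬝ᵥ b < 0 := by
  let C := (ProperCone.positive ℝ (ι → ℝ)).map (mulVecLin A).toContinuousLinearMap
  have hC : (C : Set (κ → ℝ)) = (A *ᵥ ·) '' Set.Ici 0 := by
    ext y
    simp only [C, SetLike.mem_coe, ProperCone.mem_map, LinearMap.coe_toContinuousLinearMap,
      ProperCone.toPointedCone_positive, PointedCone.mem_closure, PointedCone.coe_map,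
      PointedCone.coe_positive]
    rw [coe_mulVecLin, (isClosed_image_mulVec_nonneg hA hcol).closure_eq]
  obtain ⟨f, hfC, hfb⟩ := C.hyperplane_separation_point (x₀ := b) (by
    rw [← SetLike.mem_coe, hC]; rintro ⟨x, hx, rfl⟩; exact hb x hx rfl)
  set y := (dotProductEquiv ℝ κ).symm (f : Module.Dual ℝ (κ → ℝ))
  have hy (v : κ → ℝ) : f v = y ⬝ᵥ v :=
    (LinearMap.congr_fun ((dotProductEquiv ℝ κ).apply_symm_apply (f : Module.Dual ℝ _)) v).symm
  refine ⟨y, fun i => ?_, hy b ▸ hfb⟩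
  have := hfC (A *ᵥ Pi.single i 1) (by
    rw [← SetLike.mem_coe, hC]; exact ⟨_, Pi.single_nonneg.2 zero_le_one, rfl⟩)
  rwa [hy, dotProduct_mulVec, dotProduct_single_one] at this

theorem exists_vecMul_le_lt_dotProduct {A : Matrix κ ι ℝ} (hA : ∀ k i, 0 ≤ A k i)
    (hcol : ∀ i, ∃ k, 0 < A k i) {c : ι → ℝ} (hc : 0 ≤ c) {b : κ → ℝ} {x₀ : ι → ℝ}
    (hx₀ : 0 ≤ x₀) (hAx₀ : A *ᵥ x₀ = b) {r : ℝ} (hr : ∀ x, 0 ≤ x → A *ᵥ x = b → r < c ⬝ᵥ x) :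
    ∃ y : κ → ℝ, y ᵥ* A ≤ c ∧ r < y ⬝ᵥ b := by
  -- Farkas' lemma for the system `A x = b`, `c ⬝ᵥ x + u = r` in the unknowns `x, u ≥ 0`
  let A' : Matrix (κ ⊕ Unit) (ι ⊕ Unit) ℝ := fromBlocks A 0 (replicateRow Unit c) 1
  have hA' : ∀ k i, 0 ≤ A' k i := by
    rintro (k | _) (i | _)
    exacts [hA k i, le_rfl, hc i, zero_le_one]
  have hcol' : ∀ i, ∃ k, 0 < A' k i := by
    rintro (i | _)
    · obtain ⟨k, hk⟩ := hcol i
      exact ⟨.inl k, hk⟩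
    · exact ⟨.inr (), by simp [A']⟩
  obtain ⟨y', hy'A, hy'b⟩ := exists_vecMul_nonneg_dotProduct_neg hA' hcol'
    (b := Sum.elim b fun _ => r) <| by
      intro x hx hAx
      have hAx_b : A *ᵥ (x ∘ Sum.inl) = b := by
        simpa [A', fromBlocks_mulVec] using congrArg (· ∘ Sum.inl) hAx
      have hcx : c ⬝ᵥ (x ∘ Sum.inl) + x (.inr ()) = r := by
        simpa [A', fromBlocks_mulVec, replicateRow_mulVec_eq_const] using congrFun hAx (.inr ())
      have := hr (x ∘ Sum.inl) (fun i => hx (.inl i)) hAx_b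
      linarith [show 0 ≤ x (.inr ()) from hx _]
  have hyA : 0 ≤ (y' ∘ Sum.inl) ᵥ* A + y' (.inr ()) • c := fun i => by
    simpa [A', vecMul_fromBlocks, vecMul, dotProduct, mul_comm] using hy'A (.inl i)
  have ht : 0 ≤ y' (.inr ()) := by simpa [A', vecMul_fromBlocks] using hy'A (.inr ())
  have hyb : (y' ∘ Sum.inl) ⬝ᵥ b + y' (.inr ()) * r < 0 := by
    simpa [dotProduct, Fintype.sum_sum_type] using hy'b
  obtain ht0 | htpos := ht.eq_or_lt
  · have : 0 ≤ (y' ∘ Sum.inl) ⬝ᵥ b := by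
      rw [← hAx₀, dotProduct_mulVec]
      exact dotProduct_nonneg_of_nonneg (by simpa [← ht0] using hyA) hx₀
    rw [← ht0] at hyb
    linarith
  refine ⟨-(y' (.inr ()))⁻¹ • (y' ∘ Sum.inl), fun i => ?_, ?_⟩
  · have := hyA i
    simp only [Pi.add_apply, Pi.smul_apply, Pi.zero_apply, smul_eq_mul] at this
    rw [smul_vecMul, Pi.smul_apply, smul_eq_mul, neg_mul, neg_le, le_inv_mul_iff₀ htpos]
    linarith
  · rw [smul_dotProduct, smul_eq_mul, neg_mul, lt_neg, inv_mul_lt_iff₀ htpos]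
    linarith

end Matrix

section TransportProblem

variable {α β : Type*} [DecidableEq α] [DecidableEq β]

variable (α β) in
/-- Columns: the plan entries `h s t`, then the slacks `w s` and `z t`; rows: the marginal
constraints at `s ∈ α` and at `t ∈ β`. -/
def transportMatrix : Matrix (α ⊕ β) ((α × β) ⊕ (α ⊕ β)) ℝ :=
  fromCols
    (fromRows (of fun s q => if q.1 = s then 1 else 0) (of fun t q => if q.2 = t then 1 else 0)) 1

theorem transportMatrix_nonneg (k : α ⊕ β) (j : (α × β) ⊕ (α ⊕ β)) :
    0 ≤ transportMatrix α β k j := by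
  rcases k with s | t <;> rcases j with ⟨s', t'⟩ | k' <;>
    simp only [transportMatrix, fromCols_apply_inl, fromCols_apply_inr, fromRows_apply_inl,
      fromRows_apply_inr, of_apply, one_apply] <;> split_ifs <;> norm_num

theorem exists_transportMatrix_pos (j : (α × β) ⊕ (α ⊕ β)) :
    ∃ k, 0 < transportMatrix α β k j := by
  rcases j with ⟨s, t⟩ | k
  · exact ⟨.inl s, by simp [transportMatrix]⟩
  · exact ⟨k, by simp [transportMatrix]⟩

variable [Fintype α] [Fintype β]

@[simp] theorem transportMatrix_mulVec_inl (x : (α × β) ⊕ (α ⊕ β) → ℝ) (s : α) :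
    (transportMatrix α β *ᵥ x) (.inl s) = ∑ t, x (.inl (s, t)) + x (.inr (.inl s)) := by
  simp only [transportMatrix, fromCols_mulVec, fromRows_mulVec, one_mulVec, Pi.add_apply,
    Sum.elim_inl, Function.comp_apply, add_left_inj]
  simp only [mulVec, dotProduct, Fintype.sum_prod_type, of_apply, ite_mul, one_mul, zero_mul]
  rw [Fintype.sum_eq_single s fun s' hs' => by simp [hs']]
  simp

@[simp] theorem transportMatrix_mulVec_inr (x : (α × β) ⊕ (α ⊕ β) → ℝ) (t : β) :
    (transportMatrix α β *ᵥ x) (.inr t) = ∑ s, x (.inl (s, t)) + x (.inr (.inr t)) := by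
  simp only [transportMatrix, fromCols_mulVec, fromRows_mulVec, one_mulVec, Pi.add_apply,
    Sum.elim_inr, Function.comp_apply, add_left_inj]
  simp [mulVec, dotProduct, Fintype.sum_prod_type]

theorem transportMatrix_mulVec_elim_zero (v : α ⊕ β → ℝ) :
    transportMatrix α β *ᵥ Sum.elim 0 v = v := by
  ext (s | t) <;> simp

@[simp] theorem vecMul_transportMatrix_inl (y : α ⊕ β → ℝ) (q : α × β) :
    (y ᵥ* transportMatrix α β) (.inl q) = y (.inl q.1) + y (.inr q.2) := by
  simp [transportMatrix, vecMul, dotProduct, Fintype.sum_sum_type]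

@[simp] theorem vecMul_transportMatrix_inr (y : α ⊕ β → ℝ) (k : α ⊕ β) :
    (y ᵥ* transportMatrix α β) (.inr k) = y k := by
  simp [transportMatrix, vecMul_fromCols]

end TransportProblem

section KantorovichLP

variable {S : Type*} (μ : S → S → ℝ) (D E : S →₀ ℝ)

def primValues : Set ℝ :=
  {r | ∃ (h : S → S → ℝ) (w z : S → ℝ),
    (∀ s t, 0 ≤ h s t) ∧ (∀ s, 0 ≤ w s) ∧ (∀ s, 0 ≤ z s) ∧
    (∀ t ∈ E.support, (∑ s ∈ D.support, h s t) + z t = E t) ∧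
    (∀ s ∈ D.support, (∑ t ∈ E.support, h s t) + w s = D s) ∧
    r = (∑ s ∈ D.support, ∑ t ∈ E.support, h s t * μ s t) +
        (∑ s ∈ D.support, w s) + (∑ t ∈ E.support, z t)}

def dualValues : Set ℝ :=
  {r | ∃ a b : S → ℝ,
    (∀ s, a s ≤ 1) ∧ (∀ s, b s ≤ 1) ∧ (∀ s t, a s + b t ≤ μ s t) ∧
    r = D.sum (fun s p => a s * p) + E.sum (fun s p => b s * p)}

def transportCost : (D.support × E.support) ⊕ (D.support ⊕ E.support) → ℝ :=
  Sum.elim (fun q => μ q.1 q.2) 1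

def marginals : D.support ⊕ E.support → ℝ :=
  Sum.elim (fun s => D s) (fun t => E t)

variable {μ D E}

theorem le_of_mem_dualValues_of_mem_primValues {r r' : ℝ} (hr : r ∈ primValues μ D E)
    (hr' : r' ∈ dualValues μ D E) : r' ≤ r := by
  obtain ⟨h, w, z, hh, hw, hz, hE, hD, rfl⟩ := hr
  obtain ⟨a, b, ha, hb, hab, rfl⟩ := hr'
  have hDsum : D.sum (fun s p => a s * p)
      = ∑ s ∈ D.support, a s * ((∑ t ∈ E.support, h s t) + w s) :=
    Finset.sum_congr rfl fun s hs => by rw [hD s hs]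
  have hEsum : E.sum (fun t p => b t * p)
      = ∑ t ∈ E.support, b t * ((∑ s ∈ D.support, h s t) + z t) :=
    Finset.sum_congr rfl fun t ht => by rw [hE t ht]
  calc D.sum (fun s p => a s * p) + E.sum (fun t p => b t * p)
      = (∑ s ∈ D.support, ∑ t ∈ E.support, (a s + b t) * h s t)
        + (∑ s ∈ D.support, a s * w s) + (∑ t ∈ E.support, b t * z t) := by
        rw [hDsum, hEsum]
        simp only [mul_add, add_mul, Finset.mul_sum, Finset.sum_add_distrib]
        rw [Finset.sum_comm (s := E.support)]
        ring
    _ ≤ _ := add_le_add (add_le_add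
        (Finset.sum_le_sum fun s _ => Finset.sum_le_sum fun t _ => by
          rw [mul_comm]; exact mul_le_mul_of_nonneg_left (hab s t) (hh s t))
        (Finset.sum_le_sum fun s _ => mul_le_of_le_one_left (hw s) (ha s)))
        (Finset.sum_le_sum fun t _ => mul_le_of_le_one_left (hz t) (hb t))

theorem zero_mem_dualValues (hμ : ∀ s t, 0 ≤ μ s t) : 0 ∈ dualValues μ D E :=
  ⟨0, 0, fun _ => zero_le_one, fun _ => zero_le_one, fun s t => by simpa using hμ s t, by simp⟩

theorem dotProduct_mem_primValues {x : (D.support × E.support) ⊕ (D.support ⊕ E.support) → ℝ}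
    (hx : 0 ≤ x) (hAx : transportMatrix D.support E.support *ᵥ x = marginals D E) :
    transportCost μ D E ⬝ᵥ x ∈ primValues μ D E := by
  refine ⟨fun s t => if hs : s ∈ D.support then if ht : t ∈ E.support then
      x (.inl (⟨s, hs⟩, ⟨t, ht⟩)) else 0 else 0,
    fun s => if hs : s ∈ D.support then x (.inr (.inl ⟨s, hs⟩)) else 0,
    fun t => if ht : t ∈ E.support then x (.inr (.inr ⟨t, ht⟩)) else 0,
    fun s t => ?_, fun s => ?_, fun t => ?_, fun t ht => ?_, fun s hs => ?_, ?_⟩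
  · dsimp only; split_ifs; exacts [hx _, le_rfl, le_rfl]
  · dsimp only; split_ifs; exacts [hx _, le_rfl]
  · dsimp only; split_ifs; exacts [hx _, le_rfl]
  · have := congrFun hAx (.inr ⟨t, ht⟩)
    simp only [transportMatrix_mulVec_inr, marginals, Sum.elim_inr] at this
    rw [← Finset.sum_coe_sort]
    simpa only [Finset.coe_mem, ht, ↓reduceDIte, Subtype.coe_eta] using this
  · have := congrFun hAx (.inl ⟨s, hs⟩)
    simp only [transportMatrix_mulVec_inl, marginals, Sum.elim_inl] at this
    rw [← Finset.sum_coe_sort]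
    simpa only [Finset.coe_mem, hs, ↓reduceDIte, Subtype.coe_eta] using this
  · simp only [← Finset.sum_coe_sort D.support, ← Finset.sum_coe_sort E.support, Finset.coe_mem,
      ↓reduceDIte, Subtype.coe_eta]
    simp [dotProduct, transportCost, Fintype.sum_sum_type, Fintype.sum_prod_type, mul_comm,
      add_assoc]

theorem dotProduct_mem_dualValues (hμ : ∀ s t, 0 ≤ μ s t) {y : D.support ⊕ E.support → ℝ}
    (hy : y ᵥ* transportMatrix D.support E.support ≤ transportCost μ D E) :
    y ⬝ᵥ marginals D E ∈ dualValues μ D E := by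
  have hyD (s : D.support) : y (.inl s) ≤ 1 := by simpa [transportCost] using hy (.inr (.inl s))
  have hyE (t : E.support) : y (.inr t) ≤ 1 := by simpa [transportCost] using hy (.inr (.inr t))
  refine ⟨fun s => if hs : s ∈ D.support then y (.inl ⟨s, hs⟩) else -1,
    fun t => if ht : t ∈ E.support then y (.inr ⟨t, ht⟩) else -1,
    fun s => ?_, fun t => ?_, fun s t => ?_, ?_⟩
  · dsimp only; split_ifs <;> simp [hyD]
  · dsimp only; split_ifs <;> simp [hyE]
  · dsimp only
    split_ifs with hs ht ht
    · simpa [transportCost] using hy (.inl (⟨s, hs⟩, ⟨t, ht⟩))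
    · linarith [hyD ⟨s, hs⟩, hμ s t]
    · linarith [hyE ⟨t, ht⟩, hμ s t]
    · linarith [hμ s t]
  · simp only [Finsupp.sum, ← Finset.sum_coe_sort D.support, ← Finset.sum_coe_sort E.support,
      Finset.coe_mem, ↓reduceDIte, Subtype.coe_eta]
    simp [dotProduct, marginals, Fintype.sum_sum_type]

end KantorovichLP

/-- strong LP duality for the Kantorovich lifting: the primal
minimum equals the dual maximum. -/
theorem lift_duality {S : Type*} (μ : S → S → ℝ) (hμ : IsPremetric μ)
    (D E : S →₀ ℝ) (hD : IsSubdist D) (hE : IsSubdist E) :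
    primLift μ D E = dualLift μ D E := by
  have hμ₀ : ∀ s t, 0 ≤ μ s t := hμ.1
  have hc : 0 ≤ transportCost μ D E := by rintro (q | k) <;> simp [transportCost, hμ₀]
  have hx₀ : 0 ≤ Sum.elim (0 : D.support × E.support → ℝ) (marginals D E) := by
    rintro (q | s | t) <;> simp [marginals, hD.1, hE.1]
  have hAx₀ := transportMatrix_mulVec_elim_zero (marginals D E)
  have hprim := dotProduct_mem_primValues (μ := μ) hx₀ hAx₀
  have hbdd_below : BddBelow (primValues μ D E) :=
    ⟨0, fun r hr => le_of_mem_dualValues_of_mem_primValues hr (zero_mem_dualValues hμ₀)⟩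
  have hbdd_above : BddAbove (dualValues μ D E) :=
    ⟨_, fun r' hr' => le_of_mem_dualValues_of_mem_primValues hprim hr'⟩
  change sInf (primValues μ D E) = sSup (dualValues μ D E)
  refine le_antisymm (le_of_forall_lt fun r hr => ?_) <|
    csSup_le ⟨0, zero_mem_dualValues hμ₀⟩ fun r' hr' =>
      le_csInf ⟨_, hprim⟩ fun r hr => le_of_mem_dualValues_of_mem_primValues hr hr'
  obtain ⟨y, hyA, hyr⟩ := exists_vecMul_le_lt_dotProduct transportMatrix_nonneg
    exists_transportMatrix_pos hc hx₀ hAx₀ fun x hx hAx =>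
      hr.trans_le (csInf_le hbdd_below (dotProduct_mem_primValues hx hAx))
  exact hyr.trans_le (le_csSup hbdd_above (dotProduct_mem_dualValues hμ₀ hyA))

end
end

section
/- (Pseudo-substitutivity of the Howe lifting) Suppose μ is a metric on terms such that μ(M[V/x], N[V/x]) ≤ μ(M,N) for all terms M, N and values V. Then for all terms M, N and values V, W: μ^H(M[V/x], N[W/x]) ≤ μ^H(M,N) + μ^H(V,W). -/
noncomputable section
open Classical

/-- Terms of the affine probabilistic λ-calculus (named variables). -/
inductive Tm : Type where
  | var : ℕ → Tm
  | lam : ℕ → Tm → Tm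
  | app : Tm → Tm → Tm
  | choice : Tm → Tm → Tm
  | omega : Tm
  deriving DecidableEq

/-- Capture-avoiding substitution of a closed term `V` for variable `x`. -/
def Tm.subst (x : ℕ) (V : Tm) : Tm → Tm
  | .var y => if y = x then V else .var y
  | .lam y M => if y = x then .lam y M else .lam y (Tm.subst x V M)
  | .app M N => .app (Tm.subst x V M) (Tm.subst x V N)
  | .choice M N => .choice (Tm.subst x V M) (Tm.subst x V N)
  | .omega => .omega

/-- Values are abstractions. -/
def Tm.IsVal : Tm → Prop
  | .lam _ _ => True
  | _ => False

/-- The affine typing judgement `Γ ⊢ M`. -/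
inductive Affine : Finset ℕ → Tm → Prop where
  | var {Γ : Finset ℕ} {x : ℕ} : x ∈ Γ → Affine Γ (.var x)
  | lam {Γ : Finset ℕ} {x : ℕ} {M : Tm} : Affine (insert x Γ) M → Affine Γ (.lam x M)
  | app {Γ Δ : Finset ℕ} {M N : Tm} : Disjoint Γ Δ → Affine Γ M → Affine Δ N →
      Affine (Γ ∪ Δ) (.app M N)
  | choice {Γ : Finset ℕ} {M N : Tm} : Affine Γ M → Affine Γ N → Affine Γ (.choice M N)
  | omega {Γ : Finset ℕ} : Affine Γ .omega

/-- Finite (sub)distributions over terms. -/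
abbrev TDist := Tm →₀ ℝ

/-- Big-step evaluation `M ⇓ D`. -/
inductive BigStep : Tm → TDist → Prop where
  | omega : BigStep .omega 0
  | val {x : ℕ} {M : Tm} : BigStep (.lam x M) (Finsupp.single (.lam x M) 1)
  | choice {M N : Tm} {D E : TDist} : BigStep M D → BigStep N E →
      BigStep (.choice M N) ((1 / 2 : ℝ) • D + (1 / 2 : ℝ) • E)
  | app {M N : Tm} {D E : TDist} {F : Tm → Tm → TDist} {bv : Tm → ℕ} {bd : Tm → Tm} :
      BigStep M D → BigStep N E →
      (∀ f ∈ D.support, f = Tm.lam (bv f) (bd f)) →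
      (∀ f ∈ D.support, ∀ v ∈ E.support, BigStep (Tm.subst (bv f) v (bd f)) (F f v)) →
      BigStep (.app M N) (D.sum fun f p => E.sum fun v q => (p * q) • F f v)

/-- The semantics of a term: the (unique) big-step result, if any. -/
def sem (M : Tm) : TDist := if h : ∃ D, BigStep M D then h.choose else 0

/-- Weight (total mass) of a subdistribution. -/
def wt (D : TDist) : ℝ := D.sum fun _ p => p

/-- Probability that a term accepts a trace (a list of value arguments). -/
def Pr : List Tm → Tm → ℝ
  | [] => fun M => wt (sem M)
  | V :: s => fun M => (sem M).sum fun W p =>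
      p * (match W with
           | Tm.lam x body => Pr s (Tm.subst x V body)
           | _ => 0)

/-- The trace distance. -/
def deltaTr (M N : Tm) : ℝ := ⨆ s : List Tm, |Pr s M - Pr s N|

/-- Valid Howe judgements `Γ ⊢ M μ^H N : ε` for the affine probabilistic
λ-calculus, built on top of a metric `μ` on terms. -/
inductive Howe (μ : Tm → Tm → ℝ) : Finset ℕ → Tm → Tm → ℝ → Prop where
  | var {Γ : Finset ℕ} {x : ℕ} {M : Tm} {ε : ℝ} :
      μ (.var x) M ≤ ε → Affine (insert x Γ) M →
      Howe μ (insert x Γ) (.var x) M ε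
  | omega {Γ : Finset ℕ} {M : Tm} {ε : ℝ} :
      μ .omega M ≤ ε → Affine Γ M → Howe μ Γ .omega M ε
  | app {Γ Δ : Finset ℕ} {M N K T L : Tm} {ε γ ι : ℝ} :
      Disjoint Γ Δ → Howe μ Γ M K ε → Howe μ Δ N T γ →
      μ (.app K T) L ≤ ι → Affine (Γ ∪ Δ) L →
      Howe μ (Γ ∪ Δ) (.app M N) L (ε + γ + ι)
  | choice {Γ : Finset ℕ} {M N K T L : Tm} {ε ι γ : ℝ} :
      Howe μ Γ M K ε → Howe μ Γ N T ι →
      μ (.choice K T) L ≤ γ → Affine Γ L →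
      Howe μ Γ (.choice M N) L ((ε + ι) / 2 + γ)
  | lam {Γ : Finset ℕ} {x : ℕ} {M K L : Tm} {ε ι : ℝ} :
      Howe μ (insert x Γ) M K ε → μ (.lam x K) L ≤ ι → Affine Γ L →
      Howe μ Γ (.lam x M) L (ε + ι)

/-- The Howe lifting of `μ`: the infimum of the achievable `ε`'s (and `1` if
there is none). -/
def howe (μ : Tm → Tm → ℝ) (M N : Tm) : ℝ :=
  sInf ({ε | ∃ Γ, Howe μ Γ M N ε} ∪ {1})

/-- Premetric on terms: `[0,1]`-valued and vanishing on the diagonal. -/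
def IsPremetricT (μ : Tm → Tm → ℝ) : Prop :=
  (∀ M N, 0 ≤ μ M N) ∧ (∀ M N, μ M N ≤ 1) ∧ ∀ M, μ M M = 0

/-- Pseudometric on terms. -/
def IsPseudoT (μ : Tm → Tm → ℝ) : Prop :=
  IsPremetricT μ ∧ (∀ M N, μ M N = μ N M) ∧ ∀ M N L, μ M N ≤ μ M L + μ L N

/-- Values of the calculus are closed abstractions. -/
def Tm.IsClosedVal (V : Tm) : Prop := (∃ x M, V = Tm.lam x M) ∧ Affine ∅ V

/-!
Induct on the derivation of `Γ ⊢ M μ^H N : ε`, substituting `V` on the left and `W` on the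
right. Every rule except the variable rule for `x` itself survives substitution at no cost,
because `μ` is value-substitutive and, by affinity, `x` occurs in at most one premise of an
application. At the occurrence of `x` one composes the given derivation `V μ^H W : δ` with
the final `μ`-step by the triangle inequality, paying `δ` once. A derivation `V μ^H W : δ` in
some context can first be moved to the empty context by substituting a closed value for each
variable of the context, which changes neither `V` nor `W`.
-/

def IsValSubstitutive (μ : Tm → Tm → ℝ) : Prop :=
  ∀ (M N : Tm) (x : ℕ) (V : Tm), V.IsClosedVal →
    μ (Tm.subst x V M) (Tm.subst x V N) ≤ μ M N

theorem Finset.insert_subset_insert_erase {α : Type*} [DecidableEq α] (a : α) (s : Finset α) :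
    insert a s ⊆ insert a (s.erase a) :=
  Finset.insert_subset_iff.2 ⟨Finset.mem_insert_self a _, Finset.insert_erase_subset a s⟩

namespace Affine

theorem mono {Γ Γ' : Finset ℕ} {M : Tm} (h : Affine Γ M) (hs : Γ ⊆ Γ') : Affine Γ' M := by
  induction h generalizing Γ' with
  | var hx => exact .var (hs hx)
  | lam _ ih => exact .lam (ih (Finset.insert_subset_insert _ hs))
  | @app Γ Δ M N hdis _ _ ih₁ ih₂ =>
    have hΔ : Δ ⊆ Γ' := Finset.subset_union_right.trans hs
    rw [← Finset.sdiff_union_of_subset hΔ]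
    exact .app Finset.sdiff_disjoint
      (ih₁ (Finset.subset_sdiff.2 ⟨Finset.subset_union_left.trans hs, hdis⟩)) (ih₂ le_rfl)
  | choice _ _ ih₁ ih₂ => exact .choice (ih₁ hs) (ih₂ hs)
  | omega => exact .omega

theorem subst_eq_self {Γ : Finset ℕ} {M : Tm} (h : Affine Γ M) {x : ℕ} (hx : x ∉ Γ)
    (V : Tm) : Tm.subst x V M = M := by
  induction h with
  | @var Γ y hy =>
    have hyx : y ≠ x := by rintro rfl; exact hx hy
    simp [Tm.subst, hyx]
  | @lam Γ y M _ ih =>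
    by_cases hyx : y = x
    · simp [Tm.subst, hyx]
    · simp [Tm.subst, hyx, ih (by simp [Ne.symm hyx, hx])]
  | app hdis _ _ ih₁ ih₂ =>
    rw [Finset.mem_union, not_or] at hx
    simp [Tm.subst, ih₁ hx.1, ih₂ hx.2]
  | choice _ _ ih₁ ih₂ => simp [Tm.subst, ih₁ hx, ih₂ hx]
  | omega => rfl

theorem subst {Γ : Finset ℕ} {M : Tm} (h : Affine Γ M) (x : ℕ) {V : Tm} (hV : Affine ∅ V) :
    Affine (Γ.erase x) (Tm.subst x V M) := by
  induction h with
  | @var Γ y hy =>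
    by_cases hyx : y = x
    · simpa [Tm.subst, hyx] using hV.mono (Finset.empty_subset _)
    · simpa [Tm.subst, hyx] using Affine.var (Finset.mem_erase.2 ⟨hyx, hy⟩)
  | @lam Γ y M hM ih =>
    by_cases hyx : y = x
    · subst hyx
      simpa [Tm.subst] using Affine.lam (hM.mono (Finset.insert_subset_insert_erase y Γ))
    · rw [Finset.erase_insert_of_ne hyx] at ih
      simpa [Tm.subst, hyx] using Affine.lam ih
  | app hdis _ _ ih₁ ih₂ =>
    rw [Finset.erase_union_distrib]
    exact .app (hdis.mono (Finset.erase_subset _ _) (Finset.erase_subset _ _)) ih₁ ih₂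
  | choice _ _ ih₁ ih₂ => exact .choice ih₁ ih₂
  | omega => exact .omega

end Affine

namespace Howe

variable {μ : Tm → Tm → ℝ} {Γ : Finset ℕ} {M N : Tm} {ε : ℝ}

theorem affine_left (h : Howe μ Γ M N ε) : Affine Γ M := by
  induction h with
  | var => exact .var (Finset.mem_insert_self _ _)
  | omega => exact .omega
  | app hdis _ _ _ _ ih₁ ih₂ => exact .app hdis ih₁ ih₂
  | choice _ _ _ _ ih₁ ih₂ => exact .choice ih₁ ih₂
  | lam _ _ _ ih => exact .lam ih

theorem affine_right (h : Howe μ Γ M N ε) : Affine Γ N := by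
  cases h <;> assumption

theorem nonneg (hμ : ∀ M N, 0 ≤ μ M N) (h : Howe μ Γ M N ε) : 0 ≤ ε := by
  induction h with
  | var hε => exact (hμ _ _).trans hε
  | omega hε => exact (hμ _ _).trans hε
  | app _ _ _ hι _ ih₁ ih₂ => linarith [(hμ _ _).trans hι]
  | choice _ _ hγ _ ih₁ ih₂ => linarith [(hμ _ _).trans hγ]
  | lam _ hι _ ih => linarith [(hμ _ _).trans hι]

theorem mono (h : Howe μ Γ M N ε) {Γ' : Finset ℕ} (hs : Γ ⊆ Γ') : Howe μ Γ' M N ε := by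
  induction h generalizing Γ' with
  | @var Γ y M ε hε hA =>
    have hy : y ∈ Γ' := hs (Finset.mem_insert_self _ _)
    rw [← Finset.insert_erase hy] at hs ⊢
    exact .var hε (hA.mono hs)
  | omega hε hA => exact .omega hε (hA.mono hs)
  | @app Γ Δ M N K T L ε γ ι hdis _ _ hι hA ih₁ ih₂ =>
    have hΔ : Δ ⊆ Γ' := Finset.subset_union_right.trans hs
    have hA' := hA.mono hs
    rw [← Finset.sdiff_union_of_subset hΔ] at hA' ⊢
    exact .app Finset.sdiff_disjoint
      (ih₁ (Finset.subset_sdiff.2 ⟨Finset.subset_union_left.trans hs, hdis⟩)) (ih₂ le_rfl)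
      hι hA'
  | choice _ _ hγ hA ih₁ ih₂ => exact .choice (ih₁ hs) (ih₂ hs) hγ (hA.mono hs)
  | lam _ hι hA ih => exact .lam (ih (Finset.insert_subset_insert _ hs)) hι (hA.mono hs)

theorem refl (hμ : ∀ M, μ M M = 0) (h : Affine Γ M) : Howe μ Γ M M 0 := by
  induction h with
  | @var Γ y hy =>
    rw [← Finset.insert_erase hy]
    exact .var (hμ _).le (.var (Finset.mem_insert_self _ _))
  | lam hM ih => simpa using Howe.lam ih (hμ _).le (.lam hM)
  | app hdis hM hN ih₁ ih₂ => simpa using Howe.app hdis ih₁ ih₂ (hμ _).le (.app hdis hM hN)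
  | choice hM hN ih₁ ih₂ => simpa using Howe.choice ih₁ ih₂ (hμ _).le (.choice hM hN)
  | omega => exact .omega (hμ _).le .omega

/-- Only the last rule of a derivation looks at the right-hand term, and only through `μ · N`. -/
theorem of_dist_right_le (h : Howe μ Γ M N ε) {N' : Tm} {c : ℝ}
    (hN : ∀ P, μ P N' ≤ μ P N + c) (hA : Affine Γ N') : Howe μ Γ M N' (ε + c) := by
  cases h with
  | var hε => exact .var ((hN _).trans (by linarith)) hA
  | omega hε => exact .omega ((hN _).trans (by linarith)) hA
  | app hdis h₁ h₂ hι =>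
    simpa [add_assoc] using Howe.app hdis h₁ h₂ ((hN _).trans (add_le_add_left hι c)) hA
  | choice h₁ h₂ hγ =>
    simpa [add_assoc] using Howe.choice h₁ h₂ ((hN _).trans (add_le_add_left hγ c)) hA
  | lam h₁ hι => simpa [add_assoc] using Howe.lam h₁ ((hN _).trans (add_le_add_left hι c)) hA

theorem of_le (h : Howe μ Γ M N ε) {ε' : ℝ} (hε : ε ≤ ε') : Howe μ Γ M N ε' := by
  simpa using h.of_dist_right_le (c := ε' - ε) (fun P => by linarith) h.affine_right

end Howe

section Substitution

variable {μ : Tm → Tm → ℝ} {x : ℕ} {V W : Tm} {δ : ℝ}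

theorem Howe.subst (hμ : ∀ M N, 0 ≤ μ M N) (htri : ∀ M N L, μ M N ≤ μ M L + μ L N)
    (hsub : IsValSubstitutive μ) (hVW : Howe μ ∅ V W δ) (hW : W.IsClosedVal)
    {Γ : Finset ℕ} {M N : Tm} {ε : ℝ} (h : Howe μ Γ M N ε) :
    Howe μ (Γ.erase x) (Tm.subst x V M) (Tm.subst x W N) (ε + δ) := by
  have hδ := hVW.nonneg hμ
  have hsubW : ∀ {A B : Tm} {ι : ℝ}, μ A B ≤ ι →
      μ (Tm.subst x W A) (Tm.subst x W B) ≤ ι :=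
    fun hι => (hsub _ _ x W hW).trans hι
  induction h with
  | @var Γ y N ε hε hA =>
    have hA' := hA.subst x hW.2
    by_cases hyx : y = x
    · subst hyx
      have hWN : μ W (Tm.subst y W N) ≤ ε := by simpa [Tm.subst] using hsubW hε
      simpa [Tm.subst, add_comm δ] using (hVW.mono (Finset.empty_subset _)).of_dist_right_le
        (fun P => by linarith [htri P (Tm.subst y W N) W]) hA'
    · have hε' : μ (.var y) (Tm.subst x W N) ≤ ε := by simpa [Tm.subst, hyx] using hsubW hε
      rw [Finset.erase_insert_of_ne hyx] at hA' ⊢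
      simpa [Tm.subst, hyx] using (Howe.var hε' hA').of_le (le_add_of_nonneg_right hδ)
  | omega hε hA =>
    exact (Howe.omega (hsubW hε) (hA.subst x hW.2)).of_le (le_add_of_nonneg_right hδ)
  | @app Γ Δ M N K T L ε γ ι hdis h₁ h₂ hι hA ih₁ ih₂ =>
    have hA' := hA.subst x hW.2
    have hι' := hsubW hι
    simp only [Tm.subst] at hι' ⊢
    rw [Finset.erase_union_distrib] at hA' ⊢
    by_cases hxΔ : x ∈ Δ
    · have hxΓ : x ∉ Γ := Finset.disjoint_right.1 hdis hxΔ
      rw [Finset.erase_eq_of_notMem hxΓ] at hA' ⊢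
      rw [h₁.affine_right.subst_eq_self hxΓ] at hι'
      rw [h₁.affine_left.subst_eq_self hxΓ]
      exact (Howe.app (hdis.mono_right (Finset.erase_subset _ _)) h₁ ih₂ hι' hA').of_le
        (by linarith)
    · rw [Finset.erase_eq_of_notMem hxΔ] at hA' ⊢
      rw [h₂.affine_right.subst_eq_self hxΔ] at hι'
      rw [h₂.affine_left.subst_eq_self hxΔ]
      exact (Howe.app (hdis.mono_left (Finset.erase_subset _ _)) ih₁ h₂ hι' hA').of_le
        (by linarith)
  | choice _ _ hγ hA ih₁ ih₂ =>
    exact (Howe.choice ih₁ ih₂ (hsubW hγ) (hA.subst x hW.2)).of_le (by linarith)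
  | @lam Γ y M K L ε ι h₁ hι hA ih =>
    have hA' := hA.subst x hW.2
    by_cases hyx : y = x
    · subst hyx
      have hι' : μ (.lam y K) (Tm.subst y W L) ≤ ι := by simpa [Tm.subst] using hsubW hι
      simpa [Tm.subst] using (Howe.lam (h₁.mono (Finset.insert_subset_insert_erase y Γ)) hι'
        hA').of_le (le_add_of_nonneg_right hδ)
    · have hι' : μ (.lam y (Tm.subst x W K)) (Tm.subst x W L) ≤ ι := by
        simpa [Tm.subst, hyx] using hsubW hι
      rw [Finset.erase_insert_of_ne hyx] at ih
      simpa [Tm.subst, hyx] using (Howe.lam ih hι' hA').of_le (by linarith)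

theorem Howe.close (hμ : ∀ M N, 0 ≤ μ M N) (hrefl : ∀ M, μ M M = 0)
    (htri : ∀ M N L, μ M N ≤ μ M L + μ L N) (hsub : IsValSubstitutive μ)
    (hV : Affine ∅ V) (hW : Affine ∅ W) {Γ : Finset ℕ} (h : Howe μ Γ V W δ) :
    Howe μ ∅ V W δ := by
  induction Γ using Finset.strongInduction with
  | H Γ ih =>
    obtain rfl | ⟨y, hy⟩ := Γ.eq_empty_or_nonempty
    · exact h
    · -- substituting a closed value for `y` removes `y` from the context and fixes `V` and `W`
      have hU : (Tm.lam 0 .omega).IsClosedVal := ⟨⟨0, .omega, rfl⟩, .lam .omega⟩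
      have h' := (Howe.refl hrefl hU.2).subst hμ htri hsub hU (x := y) h
      rw [hV.subst_eq_self (Finset.notMem_empty y), hW.subst_eq_self (Finset.notMem_empty y),
        add_zero] at h'
      exact ih _ (Finset.erase_ssubset hy) h'

end Substitution

def howeBounds (μ : Tm → Tm → ℝ) (M N : Tm) : Set ℝ :=
  {ε | ∃ Γ, Howe μ Γ M N ε} ∪ {1}

section Lifting

variable {μ : Tm → Tm → ℝ}

theorem nonneg_of_mem_howeBounds (hμ : ∀ M N, 0 ≤ μ M N) {M N : Tm} {ε : ℝ}
    (hε : ε ∈ howeBounds μ M N) : 0 ≤ ε := by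
  rcases hε with ⟨Γ, h⟩ | rfl
  exacts [h.nonneg hμ, zero_le_one]

theorem bddBelow_howeBounds (hμ : ∀ M N, 0 ≤ μ M N) (M N : Tm) :
    BddBelow (howeBounds μ M N) :=
  ⟨0, fun _ => nonneg_of_mem_howeBounds hμ⟩

theorem howe_le_of_mem (hμ : ∀ M N, 0 ≤ μ M N) {M N : Tm} {ε : ℝ}
    (hε : ε ∈ howeBounds μ M N) : howe μ M N ≤ ε :=
  csInf_le (bddBelow_howeBounds hμ M N) hε

theorem howe_le_one (hμ : ∀ M N, 0 ≤ μ M N) (M N : Tm) : howe μ M N ≤ 1 :=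
  howe_le_of_mem hμ (Or.inr rfl)

theorem le_howe_add_howe (hμ : ∀ M N, 0 ≤ μ M N) {M N M' N' : Tm} {c : ℝ}
    (h : ∀ a ∈ howeBounds μ M N, ∀ b ∈ howeBounds μ M' N', c ≤ a + b) :
    c ≤ howe μ M N + howe μ M' N' := by
  have hne : ∀ M N, (howeBounds μ M N).Nonempty := fun _ _ => ⟨1, Or.inr rfl⟩
  change c ≤ sInf (howeBounds μ M N) + sInf (howeBounds μ M' N')
  rw [← csInf_add (hne M N) (bddBelow_howeBounds hμ M N) (hne M' N')
    (bddBelow_howeBounds hμ M' N')]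
  refine le_csInf ((hne M N).add (hne M' N')) ?_
  rintro _ ⟨a, ha, b, hb, rfl⟩
  exact h a ha b hb

end Lifting

/-- pseudo-substitutivity of the Howe lifting: if `μ` is
value-substitutive, then
`μ^H(M[V/x], N[W/x]) ≤ μ^H(M,N) + μ^H(V,W)` for all values `V`, `W`. -/
theorem howe_pseudo_substitutive (μ : Tm → Tm → ℝ) (h : IsPseudoT μ)
    (hsub : ∀ (M N : Tm) (x : ℕ) (V : Tm), V.IsClosedVal →
      μ (Tm.subst x V M) (Tm.subst x V N) ≤ μ M N)
    (M N : Tm) (x : ℕ) (V W : Tm) (hV : V.IsClosedVal) (hW : W.IsClosedVal) :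
    howe μ (Tm.subst x V M) (Tm.subst x W N) ≤ howe μ M N + howe μ V W := by
  obtain ⟨⟨hμ, -, hrefl⟩, -, htri⟩ := h
  refine le_howe_add_howe hμ fun a ha b hb => ?_
  rcases ha with ⟨Γ, hMN⟩ | rfl
  · rcases hb with ⟨Δ, hVW⟩ | rfl
    · have hVW₀ := hVW.close hμ hrefl htri hsub hV.2 hW.2
      exact howe_le_of_mem hμ (Or.inl ⟨_, hVW₀.subst hμ htri hsub hW hMN⟩)
    · linarith [howe_le_one hμ (Tm.subst x V M) (Tm.subst x W N), hMN.nonneg hμ]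
  · linarith [howe_le_one hμ (Tm.subst x V M) (Tm.subst x W N),
      nonneg_of_mem_howeBounds hμ hb]
end
end
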